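/- Under the backward-scan algorithm for left multiplication on an SLP: initialize W[1,q] so that W[j] = Σ_{ℓ : N_{i_ℓ} = N_j} y[ℓ], then process rules N_j → A B for j = q down to 1, and when processing rule j add W[j] to W[i] for each nonterminal occurrence N_i among {A,B}. Then when rule j is reached, W[j] equals sum_y(N_j), i.e., the sum of y[ℓ] over all ℓ (with multiplicity) such that N_j appears in the derivation of the ℓ-th final-string nonterminal N_{i_ℓ}. -/
import Mathlib


/-- Symbols of an SLP. -/
inductive SlpSym (k m q : ℕ) where
  | term : Fin k × Fin m → SlpSym k m q
  | nt : Fin q → SlpSym k m q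
deriving DecidableEq

/-- Backward-scan invariant for left multiplication on an SLP.
`W` is initialized by `W[j] = Σ_{ℓ : N_{i_ℓ} = N_j} y[ℓ]`, and scanning rules
from `q` down to `1`, processing rule `N_{j'} → A B` adds `W[j']` to `W[i]` for each
occurrence of `N_i` among `{A,B}`.  Since rules only reference lower-numbered
symbols, the value of `W[j]` when rule `j` is reached satisfies
`W[j] = init[j] + Σ_{j'} W[j']·(multiplicity of N_j in rule of N_{j'})`,
and the claim is that this equals `sum_y(N_j)`, the sum of `y[ℓ]` (with
multiplicity) over all occurrences of `N_j` in the derivation trees of the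
final-string nonterminals `N_{i_ℓ}`. -/
theorem backward_scan_invariant (k m q n : ℕ)
    (rules : Fin q → SlpSym k m q × SlpSym k m q)
    (horder : ∀ j i : Fin q,
      ((rules j).1 = SlpSym.nt i ∨ (rules j).2 = SlpSym.nt i) → i < j)
    (C : Fin n → Fin q)
    (occ : SlpSym k m q → SlpSym k m q → ℕ)
    (hocc_term : ∀ (α : SlpSym k m q) (p : Fin k × Fin m),
      occ α (SlpSym.term p) = if α = SlpSym.term p then 1 else 0)
    (hocc_nt : ∀ (α : SlpSym k m q) (j : Fin q),
      occ α (SlpSym.nt j) =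
        (if α = SlpSym.nt j then 1 else 0) + occ α (rules j).1 + occ α (rules j).2)
    (y : Fin n → ℝ) (W : Fin q → ℝ)
    (hW : ∀ j : Fin q, W j =
      (∑ ℓ, if C ℓ = j then y ℓ else 0) +
      ∑ j' : Fin q, W j' *
        ((if (rules j').1 = SlpSym.nt j then (1:ℝ) else 0) +
         (if (rules j').2 = SlpSym.nt j then (1:ℝ) else 0))) :
    ∀ j : Fin q, W j = ∑ ℓ, (occ (SlpSym.nt j) (SlpSym.nt (C ℓ)) : ℝ) * y ℓ := by
  classical
  -- coefficient: multiplicity of N_j in rule of N_{j'}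
  set c : Fin q → Fin q → ℝ := fun j' j =>
    (if (rules j').1 = SlpSym.nt j then (1:ℝ) else 0) +
    (if (rules j').2 = SlpSym.nt j then (1:ℝ) else 0) with hc
  -- measure on symbols
  let meas : SlpSym k m q → ℕ := fun α => match α with
    | SlpSym.term _ => 0
    | SlpSym.nt i => i.val + 1
  -- key identity for occ
  have key : ∀ (j : Fin q) (α : SlpSym k m q),
      (occ (SlpSym.nt j) α : ℝ) =
        (if α = SlpSym.nt j then 1 else 0) +
        ∑ j' : Fin q, (occ (SlpSym.nt j') α : ℝ) * c j' j := by
    intro j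
    have main : ∀ (N : ℕ) (α : SlpSym k m q), meas α < N →
        (occ (SlpSym.nt j) α : ℝ) =
          (if α = SlpSym.nt j then 1 else 0) +
          ∑ j' : Fin q, (occ (SlpSym.nt j') α : ℝ) * c j' j := by
      intro N
      induction N with
      | zero => intro α h; omega
      | succ N ih =>
        intro α hα
        match α with
        | SlpSym.term p =>
          simp [hocc_term]
        | SlpSym.nt i =>
          have hA : meas (rules i).1 < N := by
            rcases h1 : (rules i).1 with p | i''
            · simp only [meas]; have := hα; simp only [meas] at this; omega
            · have := horder i i'' (Or.inl h1)
              simp only [meas] at hα ⊢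
              omega
          have hB : meas (rules i).2 < N := by
            rcases h2 : (rules i).2 with p | i''
            · simp only [meas]; have := hα; simp only [meas] at this; omega
            · have := horder i i'' (Or.inr h2)
              simp only [meas] at hα ⊢
              omega
          have eA := ih (rules i).1 hA
          have eB := ih (rules i).2 hB
          -- expand both sides using hocc_nt
          have expand : ∀ j'' : Fin q, (occ (SlpSym.nt j'') (SlpSym.nt i) : ℝ) =
              (if (SlpSym.nt j'' : SlpSym k m q) = SlpSym.nt i then 1 else 0) +
              (occ (SlpSym.nt j'') (rules i).1 : ℝ) +
              (occ (SlpSym.nt j'') (rules i).2 : ℝ) := by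
            intro j''
            rw [hocc_nt]
            push_cast
            ring
          rw [expand j]
          have hsum : ∑ j' : Fin q, (occ (SlpSym.nt j') (SlpSym.nt i) : ℝ) * c j' j =
              ∑ j' : Fin q,
                ((if (SlpSym.nt j' : SlpSym k m q) = SlpSym.nt i then 1 else 0) * c j' j +
                 (occ (SlpSym.nt j') (rules i).1 : ℝ) * c j' j +
                 (occ (SlpSym.nt j') (rules i).2 : ℝ) * c j' j) := by
            apply Finset.sum_congr rfl
            intro j' _
            rw [expand j']
            ring
          rw [hsum]
          rw [Finset.sum_add_distrib, Finset.sum_add_distrib]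
          have h1 : ∑ j' : Fin q,
              (if (SlpSym.nt j' : SlpSym k m q) = SlpSym.nt i then 1 else 0) * c j' j
              = c i j := by
            rw [Finset.sum_eq_single i]
            · simp
            · intro b _ hb
              rw [if_neg (by simp [hb]), zero_mul]
            · intro h; exact absurd (Finset.mem_univ i) h
          have h2 : ∑ j' : Fin q, (occ (SlpSym.nt j') (rules i).1 : ℝ) * c j' j =
              (occ (SlpSym.nt j) (rules i).1 : ℝ) -
              (if (rules i).1 = SlpSym.nt j then 1 else 0) := by
            rw [eA]; ring
          have h3 : ∑ j' : Fin q, (occ (SlpSym.nt j') (rules i).2 : ℝ) * c j' j =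
              (occ (SlpSym.nt j) (rules i).2 : ℝ) -
              (if (rules i).2 = SlpSym.nt j then 1 else 0) := by
            rw [eB]; ring
          rw [h1, h2, h3]
          have hci : c i j = (if (rules i).1 = SlpSym.nt j then (1:ℝ) else 0) +
              (if (rules i).2 = SlpSym.nt j then (1:ℝ) else 0) := rfl
          rw [hci]
          have hiff : (if (SlpSym.nt j : SlpSym k m q) = SlpSym.nt i then (1:ℝ) else 0)
              = (if (SlpSym.nt i : SlpSym k m q) = SlpSym.nt j then (1:ℝ) else 0) := by
            by_cases h : i = j
            · simp [h]
            · rw [if_neg (by simp only [SlpSym.nt.injEq]; exact fun h' => h h'.symm),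
                  if_neg (by simp only [SlpSym.nt.injEq]; exact h)]
          rw [hiff]
          ring
    intro α
    exact main (meas α + 1) α (Nat.lt_succ_self _)
  -- the target sum
  set S : Fin q → ℝ := fun j => ∑ ℓ, (occ (SlpSym.nt j) (SlpSym.nt (C ℓ)) : ℝ) * y ℓ
    with hS
  -- S satisfies the same recurrence
  have hSrec : ∀ j : Fin q, S j =
      (∑ ℓ, if C ℓ = j then y ℓ else 0) + ∑ j' : Fin q, S j' * c j' j := by
    intro j
    simp only [hS]
    have : ∀ ℓ : Fin n, (occ (SlpSym.nt j) (SlpSym.nt (C ℓ)) : ℝ) * y ℓ =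
        (if C ℓ = j then y ℓ else 0) +
        ∑ j' : Fin q, (occ (SlpSym.nt j') (SlpSym.nt (C ℓ)) : ℝ) * c j' j * y ℓ := by
      intro ℓ
      rw [key j (SlpSym.nt (C ℓ))]
      rw [add_mul, Finset.sum_mul]
      congr 1
      by_cases h : C ℓ = j
      · simp [h]
      · rw [if_neg (by simp [h]), if_neg h, zero_mul]
    rw [Finset.sum_congr rfl (fun ℓ _ => this ℓ), Finset.sum_add_distrib]
    congr 1
    rw [Finset.sum_comm]
    apply Finset.sum_congr rfl
    intro j' _
    rw [Finset.sum_mul]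
    apply Finset.sum_congr rfl
    intro ℓ _
    ring
  -- c j' j = 0 unless j < j'
  have hczero : ∀ j' j : Fin q, ¬ j < j' → c j' j = 0 := by
    intro j' j h
    simp only [hc]
    rw [if_neg (fun h1 => h (horder j' j (Or.inl h1))),
        if_neg (fun h2 => h (horder j' j (Or.inr h2))), add_zero]
  -- difference satisfies homogeneous recurrence
  have hDrec : ∀ j : Fin q, W j - S j = ∑ j' : Fin q, (W j' - S j') * c j' j := by
    intro j
    have hWc : W j = (∑ ℓ, if C ℓ = j then y ℓ else 0) + ∑ j' : Fin q, W j' * c j' j :=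
      hW j
    rw [hWc, hSrec j]
    have hs : ∑ j' : Fin q, (W j' - S j') * c j' j =
        (∑ j' : Fin q, W j' * c j' j) - ∑ j' : Fin q, S j' * c j' j := by
      rw [← Finset.sum_sub_distrib]
      exact Finset.sum_congr rfl fun _ _ => sub_mul _ _ _
    rw [hs]
    ring
  -- downward induction: W = S
  have hD0 : ∀ j : Fin q, W j - S j = 0 := by
    have aux : ∀ t : ℕ, ∀ j : Fin q, q ≤ j.val + t → W j - S j = 0 := by
      intro t
      induction t with
      | zero => intro j hj; exact absurd j.isLt (by omega)
      | succ t ih =>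
        intro j hj
        rw [hDrec j]
        apply Finset.sum_eq_zero
        intro j' _
        by_cases h : j < j'
        · rw [ih j' (by have : j.val < j'.val := h; omega), zero_mul]
        · rw [hczero j' j h, mul_zero]
    intro j
    exact aux q j (by omega)
  intro j
  have := hD0 j
  simp only [hS] at this
  linarith
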